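/- arXiv:2505.02614 — 2 statements merged into one kernel-verified Lean document; each statement's English description precedes it below -/
import Mathlib

section
/- (Convergence of the EG± algorithm for general linear systems) Let A ∈ ℝ^{m×n} with A ≠ 0 and b ∈ ℝ^m be such that S = {x ∈ ℝ^n : Ax = b} is nonempty, and let f(x) = (1/2)‖Ax − b‖₂². Let u₀, v₀ ∈ ℝ^n_{++} and define recursively u_{k+1} = u_k ∘ exp(−α_k ∇f(u_k − v_k)), v_{k+1} = v_k ∘ exp(α_k ∇f(u_k − v_k)), where x_k = u_k − v_k and α_k = min{ f(x_k)/‖∇f(x_k)‖²_{u_k + v_k} , 1.79/‖∇f(x_k)‖_∞ }, assuming ∇f(x_k) ≠ 0 for all k. Then (u_k, v_k) converges to some (u*, v*) with u*, v* ∈ ℝ^n_+ and x* = u* − v* ∈ S, and for every k ∈ ℕ, min_{0≤i≤k} f(x_i) ≤ 4·R·(R + ‖u* + v*‖₁)·C_A² / (k+1), where R = D_h(u*, u₀) + D_h(v*, v₀) and C_A = max_{1≤j≤n} ‖A_{:j}‖₂ is the maximum Euclidean column norm of A. -/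
open Finset Filter

/-- Bregman divergence generated by the negative entropy
`h(x) = ∑ i, x i * (log (x i) - 1)` (with the convention `0 * log 0 = 0`,
which holds automatically since `Real.log 0 = 0`). -/
noncomputable def Dh {n : ℕ} (x y : Fin n → ℝ) : ℝ :=
  ∑ i, (x i * Real.log (x i / y i) - x i + y i)

/-- ℓ₁-norm of a vector. -/
noncomputable def l1 {n : ℕ} (x : Fin n → ℝ) : ℝ := ∑ i, |x i|

/-- Objective `f(x) = (1/2) ‖Ax - b‖₂²`. -/
noncomputable def fobj {m n : ℕ} (A : Matrix (Fin m) (Fin n) ℝ) (b : Fin m → ℝ)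
    (x : Fin n → ℝ) : ℝ := (1 / 2) * ∑ j, ((A.mulVec x - b) j) ^ 2

/-- Gradient `∇f(x) = Aᵀ (Ax - b)` of `f(x) = (1/2)‖Ax - b‖₂²`. -/
noncomputable def gradf {m n : ℕ} (A : Matrix (Fin m) (Fin n) ℝ) (b : Fin m → ℝ)
    (x : Fin n → ℝ) : Fin n → ℝ := A.transpose.mulVec (A.mulVec x - b)

/-- Maximum norm `‖v‖_∞`. -/
noncomputable def linfty {n : ℕ} [NeZero n] (v : Fin n → ℝ) : ℝ :=
  Finset.univ.sup' Finset.univ_nonempty fun i => |v i|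

/-- Weighted squared norm `‖v‖²_x = ∑ i, x i * (v i)²`. -/
noncomputable def wnormSq {n : ℕ} (x v : Fin n → ℝ) : ℝ := ∑ i, x i * (v i) ^ 2

/-- The Polyak-type stepsize `min { f(x)/‖∇f(x)‖²_x , 1.79/‖∇f(x)‖_∞ }`. -/
noncomputable def polyakStep {m n : ℕ} [NeZero n] (A : Matrix (Fin m) (Fin n) ℝ)
    (b : Fin m → ℝ) (x : Fin n → ℝ) : ℝ :=
  min (fobj A b x / wnormSq x (gradf A b x)) (1.79 / linfty (gradf A b x))

/-- Maximum Euclidean column norm `C_A = max_j ‖A_{:j}‖₂`. -/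
noncomputable def colNormMax {m n : ℕ} [NeZero n] (A : Matrix (Fin m) (Fin n) ℝ) : ℝ :=
  Finset.univ.sup' Finset.univ_nonempty fun j => Real.sqrt (∑ i, (A i j) ^ 2)

/-- The EG± stepsize `min { f(u-v)/‖∇f(u-v)‖²_{u+v} , 1.79/‖∇f(u-v)‖_∞ }`. -/
noncomputable def egStep {m n : ℕ} [NeZero n] (A : Matrix (Fin m) (Fin n) ℝ)
    (b : Fin m → ℝ) (u v : Fin n → ℝ) : ℝ :=
  min (fobj A b (u - v) / wnormSq (u + v) (gradf A b (u - v)))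
      (1.79 / linfty (gradf A b (u - v)))

/-!
Write `x = u - v`, `f = fobj A b`, `α_k = egStep` and `t_k = α_k f(x_k)`. For every pair
`p, q ≥ 0` with `A (p - q) = b`, the Bregman distance `D_k = D_h(p, u_k) + D_h(q, v_k)`
satisfies `D_{k+1} + t_k ≤ D_k`: the first-order term of the entropic mirror step is
`-2 α_k f(x_k)`, and the second-order term is at most `α_k² ‖∇f‖²_{u+v} ≤ α_k f(x_k)` because
`exp s ≤ 1 + s + s²` for `|s| ≤ 1.79`. Hence `∑ t_k ≤ D_0`, and `D_k ≤ D_0` bounds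
`‖u_k + v_k‖₁`; with `|∇f_j|² ≤ 2 C_A² f`, both branches of the stepsize give
`f(x_k) ≤ max (4 (D_0 + ‖p + q‖₁) C_A² t_k, 2 (C_A t_k / 1.79)²)`. So `f(x_k) → 0`, a limit
point of the bounded iterates is a solution, and taking it as `(p, q)` the Fejér monotone `D_k`
tends to `0`, forcing convergence. The rate comes from some `i ≤ k` with `t_i ≤ D_0 / (k + 1)`.
-/

namespace Real

lemma exp_le_one_add_add_sq_of_nonpos {t : ℝ} (ht : t ≤ 0) : exp t ≤ 1 + t + t ^ 2 := by
  -- `exp t ≤ 1 / (1 - t)` and `(1 + t + t ^ 2) (1 - t) = 1 - t ^ 3 ≥ 1`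
  have h : exp t * (1 - t) ≤ 1 := by
    calc exp t * (1 - t) ≤ exp t * exp (-t) := by gcongr; linarith [add_one_le_exp (-t)]
      _ = 1 := by rw [← exp_add, add_neg_cancel, exp_zero]
  nlinarith [exp_pos t, sq_nonneg t]

-- Tight: `exp t = 1 + t + t ^ 2` at `t ≈ 1.793`, whence the constant `1.79` of the stepsize.
lemma exp_le_one_add_add_sq_of_one_le {t : ℝ} (h1 : 1 ≤ t) (h2 : t ≤ 1.79) :
    exp t ≤ 1 + t + t ^ 2 := by
  obtain ⟨r, rfl⟩ : ∃ r, t = 1 + r := ⟨t - 1, by ring⟩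
  have hr0 : 0 ≤ r := by linarith
  have hr1 : r ≤ 0.79 := by linarith
  have hTaylor := exp_bound' hr0 (by linarith) (n := 5) (by norm_num)
  norm_num [Finset.sum_range_succ, Nat.factorial] at hTaylor
  calc exp (1 + r) = exp 1 * exp r := exp_add 1 r
    _ ≤ 2.7182818286 * (1 + r + r ^ 2 / 2 + r ^ 3 / 6 + r ^ 4 / 24 + r ^ 5 / 100) := by
        gcongr
        · exact exp_one_lt_d9.le
        · linarith
    _ ≤ 1 + (1 + r) + (1 + r) ^ 2 := by
        nlinarith [pow_le_pow_left₀ hr0 hr1 2, pow_le_pow_left₀ hr0 hr1 3,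
          pow_le_pow_left₀ hr0 hr1 4, mul_nonneg hr0 hr0, pow_nonneg hr0 3,
          mul_nonneg (sub_nonneg.2 hr1) hr0]

lemma exp_le_one_add_add_sq {t : ℝ} (ht : |t| ≤ 1.79) : exp t ≤ 1 + t + t ^ 2 := by
  have hr := (abs_le.1 ht).2
  rcases le_total t 0 with h0 | h0
  · exact exp_le_one_add_add_sq_of_nonpos h0
  rcases le_total t 1 with h1 | h1
  · have := (abs_le.1 (abs_exp_sub_one_sub_id_le (abs_le.2 ⟨by linarith, h1⟩))).2
    linarith
  · exact exp_le_one_add_add_sq_of_one_le h1 hr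

end Real

section Entropy

open Real

lemma sq_sqrt_sub_sqrt_le_entropy {p y : ℝ} (hp : 0 ≤ p) (hy : 0 < y) :
    (√y - √p) ^ 2 ≤ p * log (p / y) - p + y := by
  rcases hp.eq_or_lt with rfl | hp
  · simp [sq_sqrt hy.le]
  obtain ⟨a, ha, rfl⟩ : ∃ a, 0 < a ∧ p = a ^ 2 := ⟨√p, sqrt_pos.2 hp, (sq_sqrt hp.le).symm⟩
  obtain ⟨c, hc, rfl⟩ : ∃ c, 0 < c ∧ y = c ^ 2 := ⟨√y, sqrt_pos.2 hy, (sq_sqrt hy.le).symm⟩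
  rw [sqrt_sq ha.le, sqrt_sq hc.le, ← div_pow, log_pow]
  have hlog : 1 - c / a ≤ log (a / c) := by
    simpa using one_sub_inv_le_log_of_pos (div_pos ha hc)
  have : a ^ 2 * (1 - c / a) = a ^ 2 - a * c := by field_simp
  nlinarith

lemma le_two_mul_entropy_add {p y : ℝ} (hp : 0 ≤ p) (hy : 0 < y) :
    y ≤ 2 * (p * log (p / y) - p + y) + 2 * p := by
  nlinarith [sq_sqrt_sub_sqrt_le_entropy hp hy, sq_nonneg (√y - 2 * √p), sq_sqrt hp,
    sq_sqrt hy.le]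

lemma entropy_mul_exp {p y : ℝ} (c : ℝ) (hy : y ≠ 0) :
    p * log (p / (y * exp c)) - p + y * exp c =
      (p * log (p / y) - p + y) + (-p * c + y * (exp c - 1)) := by
  rcases eq_or_ne p 0 with rfl | hp
  · ring
  rw [log_div hp (mul_ne_zero hy (exp_pos c).ne'), log_mul hy (exp_pos c).ne', log_exp,
    log_div hp hy]
  ring

end Entropy

section Bregman

open Topology

variable {n : ℕ} {p y : Fin n → ℝ}

lemma Dh_nonneg (hp : ∀ i, 0 ≤ p i) (hy : ∀ i, 0 < y i) : 0 ≤ Dh p y :=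
  Finset.sum_nonneg fun i _ => (sq_nonneg _).trans (sq_sqrt_sub_sqrt_le_entropy (hp i) (hy i))

lemma sq_sqrt_sub_sqrt_le_Dh (hp : ∀ i, 0 ≤ p i) (hy : ∀ i, 0 < y i) (i : Fin n) :
    (√(y i) - √(p i)) ^ 2 ≤ Dh p y :=
  (sq_sqrt_sub_sqrt_le_entropy (hp i) (hy i)).trans <|
    Finset.single_le_sum (f := fun i => p i * Real.log (p i / y i) - p i + y i)
      (fun j _ => (sq_nonneg _).trans (sq_sqrt_sub_sqrt_le_entropy (hp j) (hy j)))
      (Finset.mem_univ i)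

lemma sum_le_two_mul_Dh_add (hp : ∀ i, 0 ≤ p i) (hy : ∀ i, 0 < y i) :
    ∑ i, y i ≤ 2 * Dh p y + 2 * ∑ i, p i := by
  rw [Dh, Finset.mul_sum, Finset.mul_sum, ← Finset.sum_add_distrib]
  exact Finset.sum_le_sum fun i _ => le_two_mul_entropy_add (hp i) (hy i)

lemma Dh_mul_exp (c : Fin n → ℝ) (hy : ∀ i, y i ≠ 0) :
    Dh p (fun i => y i * Real.exp (c i)) =
      Dh p y + ∑ i, (-p i * c i + y i * (Real.exp (c i) - 1)) := by
  rw [Dh, Dh, ← Finset.sum_add_distrib]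
  exact Finset.sum_congr rfl fun i _ => entropy_mul_exp (c i) (hy i)

lemma Dh_mul_exp_mul_le (g : Fin n → ℝ) {s : ℝ} (hy : ∀ i, 0 < y i)
    (hs : ∀ i, |s * g i| ≤ 1.79) :
    Dh p (fun i => y i * Real.exp (s * g i)) ≤
      Dh p y + s * (g ⬝ᵥ (y - p)) + s ^ 2 * wnormSq y g := by
  rw [Dh_mul_exp _ fun i => (hy i).ne', add_assoc, dotProduct, wnormSq, Finset.mul_sum,
    Finset.mul_sum, ← Finset.sum_add_distrib]
  gcongr Dh p y + ?_
  refine Finset.sum_le_sum fun i _ => ?_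
  have := mul_le_mul_of_nonneg_left
    (sub_le_iff_le_add'.2 (Real.exp_le_one_add_add_sq (hs i))) (hy i).le
  simp only [Pi.sub_apply]
  nlinarith

lemma Dh_self (p : Fin n → ℝ) : Dh p p = 0 := by
  simp [Dh]

lemma continuousAt_Dh (hp : ∀ i, 0 ≤ p i) : ContinuousAt (Dh p) p := by
  refine tendsto_finsetSum _ fun i _ => ?_
  change ContinuousAt (fun y : Fin n → ℝ => p i * Real.log (p i / y i) - p i + y i) p
  rcases (hp i).eq_or_lt with h | h
  · simpa [← h] using (continuous_apply i).continuousAt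
  · have hlog : ContinuousAt (fun y : Fin n → ℝ => Real.log (p i / y i)) p :=
      (continuousAt_const.div (continuous_apply i).continuousAt h.ne').log (by simp [h.ne'])
    exact ((hlog.const_mul (p i)).sub continuousAt_const).add (continuous_apply i).continuousAt

lemma tendsto_Dh_of_tendsto {ι : Type*} {l : Filter ι} {y : ι → Fin n → ℝ}
    (hp : ∀ i, 0 ≤ p i) (hy : Tendsto y l (𝓝 p)) :
    Tendsto (fun k => Dh p (y k)) l (𝓝 0) := by
  have := (continuousAt_Dh hp).tendsto.comp hy
  rwa [Dh_self] at this

lemma tendsto_of_tendsto_Dh {ι : Type*} {l : Filter ι} {y : ι → Fin n → ℝ}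
    (hp : ∀ i, 0 ≤ p i) (hy : ∀ k i, 0 < y k i) (hD : Tendsto (fun k => Dh p (y k)) l (𝓝 0)) :
    Tendsto y l (𝓝 p) := by
  refine tendsto_pi_nhds.2 fun i => ?_
  have hsqrt : Tendsto (fun k => √(y k i)) l (𝓝 √(p i)) := by
    rw [tendsto_iff_norm_sub_tendsto_zero]
    refine squeeze_zero (fun _ => norm_nonneg _) (fun k => ?_) (by simpa using hD.sqrt)
    rw [Real.norm_eq_abs, ← Real.sqrt_sq_eq_abs]
    exact Real.sqrt_le_sqrt (sq_sqrt_sub_sqrt_le_Dh hp (hy k) i)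
  simpa [Real.sq_sqrt (hp i), fun k => Real.sq_sqrt (hy k i).le] using hsqrt.pow 2

end Bregman

section LeastSquares

open Matrix

variable {m n : ℕ} (A : Matrix (Fin m) (Fin n) ℝ) (b : Fin m → ℝ)

lemma two_mul_fobj (x : Fin n → ℝ) :
    2 * fobj A b x = (A *ᵥ x - b) ⬝ᵥ (A *ᵥ x - b) := by
  simp only [fobj, dotProduct, sq]
  ring

lemma fobj_nonneg (x : Fin n → ℝ) : 0 ≤ fobj A b x := by
  unfold fobj
  positivity

lemma fobj_eq_zero_iff {x : Fin n → ℝ} : fobj A b x = 0 ↔ A *ᵥ x = b := by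
  rw [← sub_eq_zero (a := A *ᵥ x), ← dotProduct_self_eq_zero, ← two_mul_fobj]
  simp

lemma fobj_pos_of_gradf_ne_zero {x : Fin n → ℝ} (h : gradf A b x ≠ 0) : 0 < fobj A b x := by
  refine (fobj_nonneg A b x).lt_of_ne' fun h0 => h ?_
  simp [gradf, (fobj_eq_zero_iff A b).1 h0]

lemma continuous_fobj : Continuous (fobj A b) := by
  unfold fobj
  fun_prop

lemma gradf_dotProduct_sub {x z : Fin n → ℝ} (hz : A *ᵥ z = b) :
    gradf A b x ⬝ᵥ (z - x) = -(2 * fobj A b x) := by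
  rw [gradf, dotProduct_comm, dotProduct_mulVec, vecMul_transpose, two_mul_fobj,
    Matrix.mulVec_sub, hz, ← neg_sub, neg_dotProduct]

lemma gradf_apply (x : Fin n → ℝ) (j : Fin n) :
    gradf A b x j = ∑ i, A i j * (A *ᵥ x - b) i := by
  simp [gradf, Matrix.mulVec, dotProduct]

variable [NeZero n]

lemma sum_sq_le_colNormMax_sq (j : Fin n) : ∑ i, A i j ^ 2 ≤ colNormMax A ^ 2 :=
  (Real.sqrt_le_iff.1 <| Finset.le_sup' (fun j => √(∑ i, A i j ^ 2)) (Finset.mem_univ j)).2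

lemma sq_gradf_le (x : Fin n → ℝ) (j : Fin n) :
    gradf A b x j ^ 2 ≤ colNormMax A ^ 2 * (2 * fobj A b x) := by
  rw [gradf_apply, two_mul_fobj, dotProduct]
  calc (∑ i, A i j * (A *ᵥ x - b) i) ^ 2
      ≤ (∑ i, A i j ^ 2) * ∑ i, (A *ᵥ x - b) i ^ 2 := Finset.sum_mul_sq_le_sq_mul_sq _ _ _
    _ ≤ colNormMax A ^ 2 * ∑ i, (A *ᵥ x - b) i * (A *ᵥ x - b) i := by
        simp only [← sq]
        gcongr
        exact sum_sq_le_colNormMax_sq A j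

end LeastSquares

section Norms

variable {n : ℕ}

lemma wnormSq_nonneg {w : Fin n → ℝ} (hw : ∀ i, 0 ≤ w i) (g : Fin n → ℝ) : 0 ≤ wnormSq w g :=
  Finset.sum_nonneg fun i _ => mul_nonneg (hw i) (sq_nonneg _)

lemma wnormSq_pos {w g : Fin n → ℝ} (hw : ∀ i, 0 < w i) (hg : g ≠ 0) : 0 < wnormSq w g := by
  obtain ⟨j, hj⟩ := Function.ne_iff.1 hg
  exact Finset.sum_pos' (fun i _ => mul_nonneg (hw i).le (sq_nonneg _))
    ⟨j, Finset.mem_univ j, mul_pos (hw j) (sq_pos_of_ne_zero hj)⟩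

lemma wnormSq_add_left (w w' g : Fin n → ℝ) :
    wnormSq (w + w') g = wnormSq w g + wnormSq w' g := by
  simp only [wnormSq, Pi.add_apply, add_mul, Finset.sum_add_distrib]

lemma wnormSq_le_sum_mul {w g : Fin n → ℝ} (hw : ∀ i, 0 ≤ w i) {c : ℝ} (hg : ∀ i, g i ^ 2 ≤ c) :
    wnormSq w g ≤ (∑ i, w i) * c := by
  rw [wnormSq, Finset.sum_mul]
  exact Finset.sum_le_sum fun i _ => mul_le_mul_of_nonneg_left (hg i) (hw i)

variable [NeZero n]

lemma abs_le_linfty (v : Fin n → ℝ) (j : Fin n) : |v j| ≤ linfty v :=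
  Finset.le_sup' (fun i => |v i|) (Finset.mem_univ j)

lemma linfty_nonneg (v : Fin n → ℝ) : 0 ≤ linfty v :=
  (abs_nonneg _).trans (abs_le_linfty v 0)

lemma linfty_pos {v : Fin n → ℝ} (hv : v ≠ 0) : 0 < linfty v := by
  obtain ⟨j, hj⟩ := Function.ne_iff.1 hv
  exact (abs_pos.2 hj).trans_le (abs_le_linfty v j)

lemma linfty_sq_le {v : Fin n → ℝ} {c : ℝ} (hv : ∀ j, v j ^ 2 ≤ c) : linfty v ^ 2 ≤ c := by
  obtain ⟨j, -, hj⟩ := Finset.exists_mem_eq_sup' Finset.univ_nonempty fun i => |v i|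
  rw [linfty, hj, sq_abs]
  exact hv j

end Norms

section EGStep

open Matrix

variable {m n : ℕ} [NeZero n] {A : Matrix (Fin m) (Fin n) ℝ} {b : Fin m → ℝ} {u v : Fin n → ℝ}

lemma egStep_nonneg (huv : ∀ i, 0 ≤ u i + v i) : 0 ≤ egStep A b u v :=
  le_min (div_nonneg (fobj_nonneg A b _) (wnormSq_nonneg huv _))
    (div_nonneg (by norm_num) (linfty_nonneg _))

lemma egStep_mul_wnormSq_le (huv : ∀ i, 0 ≤ u i + v i) :
    egStep A b u v * wnormSq (u + v) (gradf A b (u - v)) ≤ fobj A b (u - v) :=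
  mul_le_of_le_div₀ (fobj_nonneg A b _) (wnormSq_nonneg huv _) (min_le_left _ _)

lemma abs_egStep_mul_gradf_le (huv : ∀ i, 0 ≤ u i + v i) (j : Fin n) :
    |egStep A b u v * gradf A b (u - v) j| ≤ 1.79 := by
  rw [abs_mul, abs_of_nonneg (egStep_nonneg huv)]
  calc egStep A b u v * |gradf A b (u - v) j|
      ≤ egStep A b u v * linfty (gradf A b (u - v)) := by
        gcongr
        · exact egStep_nonneg huv
        · exact abs_le_linfty _ j
    _ ≤ 1.79 := mul_le_of_le_div₀ (by norm_num) (linfty_nonneg _) (min_le_right _ _)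

-- The first-order term is `-2 α f` by `gradf_dotProduct_sub`; the second-order one is at most
-- `α² ‖g‖²_{u+v} ≤ α f`.
lemma Dh_add_Dh_egStep_le (hu : ∀ i, 0 < u i) (hv : ∀ i, 0 < v i) {p q : Fin n → ℝ}
    (hpq : A *ᵥ (p - q) = b) :
    Dh p (fun i => u i * Real.exp (-egStep A b u v * gradf A b (u - v) i)) +
        Dh q (fun i => v i * Real.exp (egStep A b u v * gradf A b (u - v) i)) +
        egStep A b u v * fobj A b (u - v) ≤ Dh p u + Dh q v := by
  set α := egStep A b u v
  set g := gradf A b (u - v)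
  have huv i : 0 ≤ u i + v i := (add_pos (hu i) (hv i)).le
  have hstep i : |α * g i| ≤ 1.79 := abs_egStep_mul_gradf_le huv i
  have hu' := Dh_mul_exp_mul_le (p := p) (s := -α) g hu fun i => by
    rw [neg_mul, abs_neg]
    exact hstep i
  have hv' := Dh_mul_exp_mul_le (p := q) g hv hstep
  have hdot : g ⬝ᵥ (p - q - (u - v)) = -(2 * fobj A b (u - v)) := gradf_dotProduct_sub A b hpq
  have hW : α * (α * wnormSq (u + v) g) ≤ α * fobj A b (u - v) :=
    mul_le_mul_of_nonneg_left (egStep_mul_wnormSq_le huv) (egStep_nonneg huv)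
  have hdotα := congrArg (α * ·) hdot
  simp only [dotProduct_sub] at hu' hv' hdotα
  rw [wnormSq_add_left] at hW
  linarith

-- Each branch of the `min` in `egStep` bounds `α f` below, by `f / (2 S C²)` since
-- `‖g‖²_{u+v} ≤ 2 S C² f`, and by `1.79 √(f / 2) / C` since `‖g‖²_∞ ≤ 2 C² f`.
lemma fobj_le_max_egStep_mul_fobj (hu : ∀ i, 0 < u i) (hv : ∀ i, 0 < v i)
    (hg : gradf A b (u - v) ≠ 0) {S : ℝ} (hS : ∑ i, (u i + v i) ≤ S) :
    fobj A b (u - v) ≤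
      max (2 * S * colNormMax A ^ 2 * (egStep A b u v * fobj A b (u - v)))
        (2 * (colNormMax A * (egStep A b u v * fobj A b (u - v)) / 1.79) ^ 2) := by
  set f := fobj A b (u - v)
  set g := gradf A b (u - v)
  set C := colNormMax A
  have hf : 0 < f := fobj_pos_of_gradf_ne_zero A b hg
  have hW : 0 < wnormSq (u + v) g := wnormSq_pos (fun i => add_pos (hu i) (hv i)) hg
  have hG : 0 < linfty g := linfty_pos hg
  have hWle : wnormSq (u + v) g ≤ 2 * S * C ^ 2 * f := by
    calc wnormSq (u + v) g ≤ (∑ i, (u i + v i)) * (C ^ 2 * (2 * f)) :=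
          wnormSq_le_sum_mul (fun i => (add_pos (hu i) (hv i)).le) (sq_gradf_le A b _)
      _ ≤ S * (C ^ 2 * (2 * f)) := by gcongr
      _ = 2 * S * C ^ 2 * f := by ring
  have hGle : linfty g ^ 2 ≤ C ^ 2 * (2 * f) := linfty_sq_le (sq_gradf_le A b _)
  rcases min_cases (f / wnormSq (u + v) g) (1.79 / linfty g) with ⟨hα, -⟩ | ⟨hα, -⟩
  · refine le_max_of_le_left ?_
    calc f = f * wnormSq (u + v) g / wnormSq (u + v) g := by field_simp
      _ ≤ f * (2 * S * C ^ 2 * f) / wnormSq (u + v) g := by gcongr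
      _ = _ := by rw [egStep, hα]; ring
  · refine le_max_of_le_right ?_
    calc f = f * linfty g ^ 2 / linfty g ^ 2 := by field_simp
      _ ≤ f * (C ^ 2 * (2 * f)) / linfty g ^ 2 := by gcongr
      _ = _ := by rw [egStep, hα]; field_simp

end EGStep

lemma max_mul_sq_le_of_le_div {t R L C N : ℝ} (ht : 0 ≤ t) (htR : t ≤ R / N) (hN : 1 ≤ N)
    (hL : 0 ≤ L) :
    max (4 * (R + L) * C ^ 2 * t) (2 * (C * t / 1.79) ^ 2) ≤ 4 * R * (R + L) * C ^ 2 / N := by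
  have hR : 0 ≤ R := by
    have h := mul_nonneg (ht.trans htR) (zero_le_one.trans hN)
    rwa [div_mul_cancel₀ _ (by positivity)] at h
  set s := R / N
  have hs : s ≤ R := div_le_self hR hN
  have hts : t * t ≤ (R + L) * s := mul_le_mul (htR.trans hs |>.trans (by linarith)) htR ht
    (by linarith)
  rw [show 4 * R * (R + L) * C ^ 2 / N = 4 * (R + L) * C ^ 2 * s by ring]
  have hs0 : 0 ≤ s := ht.trans htR
  refine max_le (by gcongr) ?_
  calc 2 * (C * t / 1.79) ^ 2 = 2 / 1.79 ^ 2 * (C ^ 2 * (t * t)) := by ring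
    _ ≤ C ^ 2 * (t * t) := mul_le_of_le_one_left (by positivity) (by norm_num)
    _ ≤ C ^ 2 * ((R + L) * s) := by gcongr
    _ ≤ 4 * (R + L) * C ^ 2 * s := by
      nlinarith [mul_nonneg (mul_nonneg (add_nonneg hR hL) hs0) (sq_nonneg C)]

lemma pos_of_succ_eq_mul_exp {n : ℕ} {y c : ℕ → Fin n → ℝ} (h0 : ∀ i, 0 < y 0 i)
    (hsucc : ∀ k i, y (k + 1) i = y k i * Real.exp (c k i)) : ∀ k i, 0 < y k i := by
  intro k
  induction k with
  | zero => exact h0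
  | succ k ih => exact fun i => (hsucc k i).symm ▸ mul_pos (ih i) (Real.exp_pos _)

structure IsEGpmSeq {m n : ℕ} [NeZero n] (A : Matrix (Fin m) (Fin n) ℝ) (b : Fin m → ℝ)
    (u v : ℕ → Fin n → ℝ) : Prop where
  u_zero_pos : ∀ i, 0 < u 0 i
  v_zero_pos : ∀ i, 0 < v 0 i
  u_succ : ∀ k i, u (k + 1) i =
    u k i * Real.exp (-(egStep A b (u k) (v k)) * gradf A b (u k - v k) i)
  v_succ : ∀ k i, v (k + 1) i =
    v k i * Real.exp ((egStep A b (u k) (v k)) * gradf A b (u k - v k) i)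

namespace IsEGpmSeq

open Matrix Topology

variable {m n : ℕ} [NeZero n] {A : Matrix (Fin m) (Fin n) ℝ} {b : Fin m → ℝ}
  {u v : ℕ → Fin n → ℝ} {p q : Fin n → ℝ}

lemma u_pos (h : IsEGpmSeq A b u v) : ∀ k i, 0 < u k i :=
  pos_of_succ_eq_mul_exp h.u_zero_pos h.u_succ

lemma v_pos (h : IsEGpmSeq A b u v) : ∀ k i, 0 < v k i :=
  pos_of_succ_eq_mul_exp h.v_zero_pos h.v_succ

lemma decrease_nonneg (h : IsEGpmSeq A b u v) (k : ℕ) :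
    0 ≤ egStep A b (u k) (v k) * fobj A b (u k - v k) :=
  mul_nonneg (egStep_nonneg fun i => (add_pos (h.u_pos k i) (h.v_pos k i)).le) (fobj_nonneg A b _)

lemma Dh_succ_add_le (h : IsEGpmSeq A b u v) (hpq : A *ᵥ (p - q) = b) (k : ℕ) :
    Dh p (u (k + 1)) + Dh q (v (k + 1)) + egStep A b (u k) (v k) * fobj A b (u k - v k) ≤
      Dh p (u k) + Dh q (v k) := by
  rw [funext (h.u_succ k), funext (h.v_succ k)]
  exact Dh_add_Dh_egStep_le (h.u_pos k) (h.v_pos k) hpq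

lemma sum_decrease_add_Dh_le (h : IsEGpmSeq A b u v) (hpq : A *ᵥ (p - q) = b) (N : ℕ) :
    ∑ k ∈ Finset.range N, egStep A b (u k) (v k) * fobj A b (u k - v k) +
        (Dh p (u N) + Dh q (v N)) ≤ Dh p (u 0) + Dh q (v 0) := by
  induction N with
  | zero => simp
  | succ N ih =>
    rw [Finset.sum_range_succ]
    linarith [h.Dh_succ_add_le hpq N]

lemma sum_decrease_le (h : IsEGpmSeq A b u v) (hp : ∀ i, 0 ≤ p i) (hq : ∀ i, 0 ≤ q i)
    (hpq : A *ᵥ (p - q) = b) (N : ℕ) :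
    ∑ k ∈ Finset.range N, egStep A b (u k) (v k) * fobj A b (u k - v k) ≤
      Dh p (u 0) + Dh q (v 0) := by
  linarith [h.sum_decrease_add_Dh_le hpq N, Dh_nonneg hp (h.u_pos N), Dh_nonneg hq (h.v_pos N)]

lemma Dh_le (h : IsEGpmSeq A b u v) (hpq : A *ᵥ (p - q) = b) (N : ℕ) :
    Dh p (u N) + Dh q (v N) ≤ Dh p (u 0) + Dh q (v 0) := by
  linarith [h.sum_decrease_add_Dh_le hpq N,
    Finset.sum_nonneg fun k (_ : k ∈ Finset.range N) => h.decrease_nonneg k]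

lemma sum_u_add_v_le (h : IsEGpmSeq A b u v) (hp : ∀ i, 0 ≤ p i) (hq : ∀ i, 0 ≤ q i)
    (hpq : A *ᵥ (p - q) = b) (k : ℕ) :
    ∑ i, (u k i + v k i) ≤ 2 * (Dh p (u 0) + Dh q (v 0) + ∑ i, (p i + q i)) := by
  simp only [Finset.sum_add_distrib]
  linarith [sum_le_two_mul_Dh_add hp (h.u_pos k), sum_le_two_mul_Dh_add hq (h.v_pos k),
    h.Dh_le hpq k]

lemma fobj_le (h : IsEGpmSeq A b u v) (hgrad : ∀ k, gradf A b (u k - v k) ≠ 0)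
    (hp : ∀ i, 0 ≤ p i) (hq : ∀ i, 0 ≤ q i) (hpq : A *ᵥ (p - q) = b) (k : ℕ) :
    fobj A b (u k - v k) ≤
      max (4 * (Dh p (u 0) + Dh q (v 0) + ∑ i, (p i + q i)) * colNormMax A ^ 2 *
          (egStep A b (u k) (v k) * fobj A b (u k - v k)))
        (2 * (colNormMax A * (egStep A b (u k) (v k) * fobj A b (u k - v k)) / 1.79) ^ 2) := by
  refine (fobj_le_max_egStep_mul_fobj (h.u_pos k) (h.v_pos k) (hgrad k)
    (h.sum_u_add_v_le hp hq hpq k)).trans_eq ?_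
  ring_nf

lemma tendsto_fobj (h : IsEGpmSeq A b u v) (hgrad : ∀ k, gradf A b (u k - v k) ≠ 0)
    (hp : ∀ i, 0 ≤ p i) (hq : ∀ i, 0 ≤ q i) (hpq : A *ᵥ (p - q) = b) :
    Tendsto (fun k => fobj A b (u k - v k)) atTop (𝓝 0) := by
  have hdec : Tendsto (fun k => egStep A b (u k) (v k) * fobj A b (u k - v k)) atTop (𝓝 0) :=
    (summable_of_sum_range_le h.decrease_nonneg (h.sum_decrease_le hp hq hpq)).tendsto_atTop_zero
  refine squeeze_zero (fun k => fobj_nonneg A b _) (h.fobj_le hgrad hp hq hpq) ?_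
  simpa using
    (hdec.const_mul (4 * (Dh p (u 0) + Dh q (v 0) + ∑ i, (p i + q i)) * colNormMax A ^ 2)).max
      ((((hdec.const_mul (colNormMax A)).div_const 1.79).pow 2).const_mul 2)

lemma exists_subseq_tendsto (h : IsEGpmSeq A b u v) (hp : ∀ i, 0 ≤ p i) (hq : ∀ i, 0 ≤ q i)
    (hpq : A *ᵥ (p - q) = b) :
    ∃ us vs : Fin n → ℝ, (∀ i, 0 ≤ us i) ∧ (∀ i, 0 ≤ vs i) ∧ ∃ φ : ℕ → ℕ, StrictMono φ ∧
      Tendsto (u ∘ φ) atTop (𝓝 us) ∧ Tendsto (v ∘ φ) atTop (𝓝 vs) := by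
  set M := 2 * (Dh p (u 0) + Dh q (v 0) + ∑ i, (p i + q i))
  have hbox : ∀ k, (u k, v k) ∈ Set.Icc (0, 0) (fun _ => M, fun _ => M) := fun k => by
    have hle i : u k i + v k i ≤ M :=
      (Finset.single_le_sum (f := fun j => u k j + v k j)
        (fun j _ => (add_pos (h.u_pos k j) (h.v_pos k j)).le) (Finset.mem_univ i)).trans
        (h.sum_u_add_v_le hp hq hpq k)
    refine ⟨⟨fun i => (h.u_pos k i).le, fun i => (h.v_pos k i).le⟩,
      fun i => ?_, fun i => ?_⟩ <;> linarith [hle i, h.u_pos k i, h.v_pos k i]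
  obtain ⟨⟨us, vs⟩, hmem, φ, hφ, hlim⟩ := isCompact_Icc.tendsto_subseq hbox
  exact ⟨us, vs, hmem.1.1, hmem.1.2, φ, hφ, (continuous_fst.tendsto _).comp hlim,
    (continuous_snd.tendsto _).comp hlim⟩

-- Fejér monotonicity: `D_h` to a solution is nonincreasing, so a subsequence suffices.
lemma tendsto_of_subseq (h : IsEGpmSeq A b u v) (hp : ∀ i, 0 ≤ p i) (hq : ∀ i, 0 ≤ q i)
    (hpq : A *ᵥ (p - q) = b) {φ : ℕ → ℕ} (hφ : StrictMono φ)
    (hu : Tendsto (u ∘ φ) atTop (𝓝 p)) (hv : Tendsto (v ∘ φ) atTop (𝓝 q)) :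
    Tendsto u atTop (𝓝 p) ∧ Tendsto v atTop (𝓝 q) := by
  set D := fun k => Dh p (u k) + Dh q (v k)
  have hanti : Antitone D := antitone_nat_of_succ_le fun k => by
    linarith [h.Dh_succ_add_le hpq k, h.decrease_nonneg k]
  have hD : Tendsto D atTop (𝓝 0) := by
    rw [tendsto_iff_tendsto_subseq_of_antitone hanti hφ.tendsto_atTop]
    have := (tendsto_Dh_of_tendsto hp hu).add (tendsto_Dh_of_tendsto hq hv)
    rwa [add_zero] at this
  have hDu k := Dh_nonneg hp (h.u_pos k)
  have hDv k := Dh_nonneg hq (h.v_pos k)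
  exact ⟨tendsto_of_tendsto_Dh hp h.u_pos <| squeeze_zero hDu (fun k => by linarith [hDv k]) hD,
    tendsto_of_tendsto_Dh hq h.v_pos <| squeeze_zero hDv (fun k => by linarith [hDu k]) hD⟩

lemma exists_tendsto (h : IsEGpmSeq A b u v) (hgrad : ∀ k, gradf A b (u k - v k) ≠ 0)
    (hp : ∀ i, 0 ≤ p i) (hq : ∀ i, 0 ≤ q i) (hpq : A *ᵥ (p - q) = b) :
    ∃ us vs : Fin n → ℝ, (∀ i, 0 ≤ us i) ∧ (∀ i, 0 ≤ vs i) ∧ A *ᵥ (us - vs) = b ∧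
      Tendsto u atTop (𝓝 us) ∧ Tendsto v atTop (𝓝 vs) := by
  obtain ⟨us, vs, hus, hvs, φ, hφ, hu, hv⟩ := h.exists_subseq_tendsto hp hq hpq
  have hsol : A *ᵥ (us - vs) = b := by
    refine (fobj_eq_zero_iff A b).1 (tendsto_nhds_unique ?_
      ((h.tendsto_fobj hgrad hp hq hpq).comp hφ.tendsto_atTop))
    exact ((continuous_fobj A b).tendsto _).comp (hu.sub hv)
  exact ⟨us, vs, hus, hvs, hsol, h.tendsto_of_subseq hus hvs hsol hφ hu hv⟩

lemma inf'_fobj_le (h : IsEGpmSeq A b u v) (hgrad : ∀ k, gradf A b (u k - v k) ≠ 0)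
    (hp : ∀ i, 0 ≤ p i) (hq : ∀ i, 0 ≤ q i) (hpq : A *ᵥ (p - q) = b) (k : ℕ) :
    (Finset.range (k + 1)).inf' Finset.nonempty_range_add_one
        (fun i => fobj A b (u i - v i)) ≤
      4 * (Dh p (u 0) + Dh q (v 0)) * ((Dh p (u 0) + Dh q (v 0)) + l1 (p + q)) *
        colNormMax A ^ 2 / (k + 1) := by
  have hl1 : l1 (p + q) = ∑ i, (p i + q i) :=
    Finset.sum_congr rfl fun i _ => abs_of_nonneg (add_nonneg (hp i) (hq i))
  have hsum : ∑ i ∈ Finset.range (k + 1), egStep A b (u i) (v i) * fobj A b (u i - v i) ≤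
      ∑ _i ∈ Finset.range (k + 1), (Dh p (u 0) + Dh q (v 0)) / (k + 1) := by
    rw [Finset.sum_const, Finset.card_range, nsmul_eq_mul]
    push_cast
    rw [mul_div_cancel₀ _ (by positivity)]
    exact h.sum_decrease_le hp hq hpq (k + 1)
  obtain ⟨i, hi, hti⟩ := Finset.exists_le_of_sum_le Finset.nonempty_range_add_one hsum
  calc _ ≤ fobj A b (u i - v i) := Finset.inf'_le _ hi
    _ ≤ _ := h.fobj_le hgrad hp hq hpq i
    _ ≤ _ := by
      rw [hl1]
      exact max_mul_sq_le_of_le_div (h.decrease_nonneg i) hti (by simp)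
        (Finset.sum_nonneg fun i _ => add_nonneg (hp i) (hq i))

end IsEGpmSeq

theorem eg_pm_convergence_general {m n : ℕ} [NeZero n]
    (A : Matrix (Fin m) (Fin n) ℝ) (b : Fin m → ℝ)
    (hS : ∃ x : Fin n → ℝ, A.mulVec x = b)
    (u v : ℕ → Fin n → ℝ) (hu0 : ∀ i, 0 < u 0 i) (hv0 : ∀ i, 0 < v 0 i)
    (hgrad : ∀ k, gradf A b (u k - v k) ≠ 0)
    (hrecu : ∀ k i, u (k + 1) i =
      u k i * Real.exp (-(egStep A b (u k) (v k)) * gradf A b (u k - v k) i))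
    (hrecv : ∀ k i, v (k + 1) i =
      v k i * Real.exp ((egStep A b (u k) (v k)) * gradf A b (u k - v k) i)) :
    ∃ ustar vstar : Fin n → ℝ, (∀ i, 0 ≤ ustar i) ∧ (∀ i, 0 ≤ vstar i) ∧
      A.mulVec (ustar - vstar) = b ∧
      Filter.Tendsto u Filter.atTop (nhds ustar) ∧
      Filter.Tendsto v Filter.atTop (nhds vstar) ∧
      ∀ k : ℕ, (Finset.range (k + 1)).inf' (Finset.nonempty_range_iff.mpr (Nat.succ_ne_zero k))
          (fun i => fobj A b (u i - v i)) ≤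
        4 * (Dh ustar (u 0) + Dh vstar (v 0)) *
          ((Dh ustar (u 0) + Dh vstar (v 0)) + l1 (ustar + vstar)) *
          (colNormMax A) ^ 2 / (k + 1) := by
  have h : IsEGpmSeq A b u v := ⟨hu0, hv0, hrecu, hrecv⟩
  obtain ⟨x, hx⟩ := hS
  have hx' : A.mulVec (x⁺ - x⁻) = b := by rw [posPart_sub_negPart, hx]
  obtain ⟨us, vs, hus, hvs, hsol, hu, hv⟩ :=
    h.exists_tendsto hgrad (fun i => posPart_nonneg x i) (fun i => negPart_nonneg x i) hx'
  exact ⟨us, vs, hus, hvs, hsol, hu, hv, h.inf'_fobj_le hgrad hus hvs hsol⟩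

/-- Convergence of the EG± algorithm for general linear systems: if `S ≠ ∅`,
`u₀, v₀ ∈ ℝⁿ₊₊`, and `u_{k+1} = u_k ∘ exp(-α_k ∇f(x_k))`,
`v_{k+1} = v_k ∘ exp(α_k ∇f(x_k))` with `x_k = u_k - v_k` and the Polyak-type
stepsize `α_k`, then `(u_k, v_k)` converges to some `(u*, v*)` with
`x* = u* - v* ∈ S` and
`min_{0 ≤ i ≤ k} f(x_i) ≤ 4 R (R + ‖u* + v*‖₁) C_A² / (k+1)`,
where `R = D_h(u*, u₀) + D_h(v*, v₀)`. -/
theorem eg_pm_convergence {m n : ℕ} [NeZero n]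
    (A : Matrix (Fin m) (Fin n) ℝ) (hA : A ≠ 0) (b : Fin m → ℝ)
    (hS : ∃ x : Fin n → ℝ, A.mulVec x = b)
    (u v : ℕ → Fin n → ℝ) (hu0 : ∀ i, 0 < u 0 i) (hv0 : ∀ i, 0 < v 0 i)
    (hgrad : ∀ k, gradf A b (u k - v k) ≠ 0)
    (hrecu : ∀ k i, u (k + 1) i =
      u k i * Real.exp (-(egStep A b (u k) (v k)) * gradf A b (u k - v k) i))
    (hrecv : ∀ k i, v (k + 1) i =
      v k i * Real.exp ((egStep A b (u k) (v k)) * gradf A b (u k - v k) i)) :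
    ∃ ustar vstar : Fin n → ℝ, (∀ i, 0 ≤ ustar i) ∧ (∀ i, 0 ≤ vstar i) ∧
      A.mulVec (ustar - vstar) = b ∧
      Filter.Tendsto u Filter.atTop (nhds ustar) ∧
      Filter.Tendsto v Filter.atTop (nhds vstar) ∧
      ∀ k : ℕ, (Finset.range (k + 1)).inf' (Finset.nonempty_range_iff.mpr (Nat.succ_ne_zero k))
          (fun i => fobj A b (u i - v i)) ≤
        4 * (Dh ustar (u 0) + Dh vstar (v 0)) *
          ((Dh ustar (u 0) + Dh vstar (v 0)) + l1 (ustar + vstar)) *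
          (colNormMax A) ^ 2 / (k + 1) :=
  eg_pm_convergence_general A b hS u v hu0 hv0 hgrad hrecu hrecv
end

section
/- (Entropic mirror descent for convex L-smooth functions) Let f : ℝ^n → ℝ be convex and differentiable with L-Lipschitz gradient (L > 0), and suppose z ∈ ℝ^n_+ is a global minimizer of f over ℝ^n, with f* = f(z). Let x₀ ∈ ℝ^n_{++} and define recursively x_{k+1} = x_k ∘ exp(−α_k ∇f(x_k)) with α_k = min{ (f(x_k) − f*)/(2‖∇f(x_k)‖²_{x_k}) , 1.79/‖∇f(x_k)‖_∞ }, assuming ∇f(x_k) ≠ 0 for all k. Then for every k ∈ ℕ, min_{0≤i≤k} f(x_i) − f* ≤ 16·L·D_h(z, x₀)·( D_h(z, x₀) + ‖z‖₁ ) / (k+1). -/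
open Finset Filter

/-!
Write `δₖ = f(xₖ) - f*` and `dₖ = D_h(z, xₖ) - D_h(z, xₖ₊₁)`. The three-point identity of the
entropy, `exp t ≤ 1 + t + t²` for `t ≤ 1.79`, and the gradient inequality
`δₖ ≤ ⟪∇f(xₖ), xₖ - z⟫` give `dₖ ≥ αₖ δₖ - αₖ² ∑ xₖᵢ ∇ᵢf(xₖ)² ≥ αₖ δₖ / 2 ≥ 0`.
With `‖∇f(xₖ)‖² ≤ 2 L δₖ` (L-smoothness) and `∑ xₖᵢ ≤ (8/5) (D_h(z, xₖ) + ‖z‖₁)`, each regime of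
the step size yields `δₖ ≤ 16 L (D_h(z, x₀) + ‖z‖₁) dₖ`; in the regime `αₖ = 1.79 / ‖∇f(xₖ)‖_∞`
this goes through `δₖ ≤ 3 L dₖ²` and `dₖ ≤ D_h(z, xₖ) ≤ D_h(z, x₀)`. Summing, the `dₖ` telescope.
-/

open Real

lemma exp_mul_one_add_sub_le_exp (s t : ℝ) : exp s * (1 + t - s) ≤ exp t := by
  calc exp s * (1 + t - s) ≤ exp s * exp (t - s) := by
        gcongr; linarith [add_one_le_exp (t - s)]
    _ = exp t := by rw [← exp_add, add_sub_cancel]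

lemma exp_one_point_three_five_le : exp 1.35 ≤ 4 := by
  have h : exp 0.35 ≤ 1.4237 := by
    refine (exp_bound' (by norm_num) (by norm_num) (n := 5) (by norm_num)).trans ?_
    norm_num [Finset.sum_range_succ, Nat.factorial]
  rw [show (1.35 : ℝ) = 1 + 0.35 by norm_num, exp_add]
  nlinarith [exp_one_lt_d9, exp_pos 0.35]

lemma exp_one_point_seven_nine_le : exp 1.79 ≤ 5.9941 := by
  have h : exp 0.79 ≤ 2.20341 := by
    refine (exp_bound' (by norm_num) (by norm_num) (n := 8) (by norm_num)).trans ?_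
    norm_num [Finset.sum_range_succ, Nat.factorial]
  rw [show (1.79 : ℝ) = 1 + 0.79 by norm_num, exp_add]
  nlinarith [exp_one_lt_d9, exp_pos 0.79]

-- Nearly sharp at `t = 1.79`: `exp 1.79 ≈ 5.9895 < 5.9941 = 1 + 1.79 + 1.79²`.
lemma exp_le_one_add_add_sq {t : ℝ} (ht : t ≤ 1.79) : exp t ≤ 1 + t + t ^ 2 := by
  have of_anchor (b E : ℝ) (hb : exp b ≤ E) (hbt : t < 1 + b)
      (hE : E ≤ (1 + t + t ^ 2) * (1 + b - t)) : exp t ≤ 1 + t + t ^ 2 :=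
    le_of_mul_le_mul_right ((exp_mul_one_add_sub_le_exp t b).trans (hb.trans hE))
      (by linarith)
  rcases le_or_gt t 0 with h0 | h0
  · refine of_anchor 0 1 exp_zero.le (by linarith) ?_
    nlinarith [pow_nonneg (neg_nonneg.2 h0) 3]
  rcases le_or_gt t 1 with h1 | h1
  · have := abs_exp_sub_one_sub_id_le (x := t) (by rw [abs_le]; constructor <;> linarith)
    linarith [le_abs_self (exp t - 1 - t)]
  rcases le_or_gt t 1.35 with h2 | h2
  · refine of_anchor 1.35 4 exp_one_point_three_five_le (by linarith) ?_
    nlinarith [mul_nonneg (sub_nonneg.2 h1.le) (sub_nonneg.2 h2)]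
  · refine of_anchor 1.79 5.9941 exp_one_point_seven_nine_le (by linarith) ?_
    nlinarith [mul_nonneg (sub_nonneg.2 ht) (by nlinarith : (0 : ℝ) ≤ t ^ 2 - 1.79)]

lemma neg_three_eighths_le_mul_log {t : ℝ} (ht : 0 ≤ t) : -(3 / 8) ≤ t * log t := by
  rcases ht.eq_or_lt with rfl | ht
  · norm_num
  have h := mul_exp_neg_le_exp_neg_one (-log t)
  rw [neg_neg, exp_log ht, exp_neg] at h
  have he : (exp 1)⁻¹ ≤ 3 / 8 := by
    rw [inv_le_comm₀ (exp_pos 1) (by norm_num)]; linarith [exp_one_gt_d9]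
  linarith

section Gradient

open scoped InnerProductSpace

variable {F : Type*} [NormedAddCommGroup F] [InnerProductSpace ℝ F] [CompleteSpace F]
  {f : F → ℝ}

lemma HasGradientAt.hasDerivAt_add_smul {f' a v : F} {t : ℝ}
    (h : HasGradientAt f f' (a + t • v)) :
    HasDerivAt (fun s : ℝ => f (a + s • v)) ⟪f', v⟫_ℝ t := by
  have hline : HasDerivAt (fun s : ℝ => a + s • v) v t := by
    simpa using ((hasDerivAt_id t).smul_const v).const_add a
  simpa [Function.comp_def] using h.hasFDerivAt.comp_hasDerivAt t hline

lemma ConvexOn.sub_le_inner_gradient (hf : ConvexOn ℝ Set.univ f) {f' a : F}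
    (hf' : HasGradientAt f f' a) (b : F) : f a - f b ≤ ⟪f', a - b⟫_ℝ := by
  have hφ : ConvexOn ℝ Set.univ (fun s : ℝ => f (a + s • (b - a))) := by
    simpa [Function.comp_def, AffineMap.lineMap_apply, add_comm] using
      hf.comp_affineMap (AffineMap.lineMap a b)
  have hf'0 : HasGradientAt f f' (a + (0 : ℝ) • (b - a)) := by rwa [zero_smul, add_zero]
  have hd := hφ.le_slope_of_hasDerivAt (Set.mem_univ 0) (Set.mem_univ 1) one_pos
    hf'0.hasDerivAt_add_smul
  simp only [slope_def_field, one_smul, add_sub_cancel, zero_smul, add_zero, sub_zero,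
    div_one] at hd
  rw [← neg_sub b a, inner_neg_right]
  linarith

lemma le_add_inner_gradient_add_sq {g : F → F} {L : ℝ} (hg : ∀ y, HasGradientAt f (g y) y)
    (hlip : ∀ y y', ‖g y - g y'‖ ≤ L * ‖y - y'‖) (a b : F) :
    f b ≤ f a + ⟪g a, b - a⟫_ℝ + L / 2 * ‖b - a‖ ^ 2 := by
  set v := b - a
  set ψ : ℝ → ℝ := fun t => f (a + t • v) - t * ⟪g a, v⟫_ℝ - L / 2 * t ^ 2 * ‖v‖ ^ 2
  have hψ (t : ℝ) : HasDerivAt ψ (⟪g (a + t • v) - g a, v⟫_ℝ - L * t * ‖v‖ ^ 2) t := by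
    refine ((((hg (a + t • v)).hasDerivAt_add_smul).sub
      ((hasDerivAt_id t).mul_const ⟪g a, v⟫_ℝ)).sub
      (((hasDerivAt_pow 2 t).const_mul (L / 2)).mul_const (‖v‖ ^ 2))).congr_deriv ?_
    simp only [inner_sub_left, one_mul, Nat.cast_ofNat, Nat.add_one_sub_one, pow_one]
    ring
  have hanti : AntitoneOn ψ (Set.Icc 0 1) := by
    refine antitoneOn_of_deriv_nonpos (convex_Icc 0 1)
      (fun t _ => (hψ t).continuousAt.continuousWithinAt)
      (fun t _ => (hψ t).differentiableAt.differentiableWithinAt) fun t ht => ?_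
    rw [interior_Icc] at ht
    rw [(hψ t).deriv, sub_nonpos]
    calc ⟪g (a + t • v) - g a, v⟫_ℝ ≤ ‖g (a + t • v) - g a‖ * ‖v‖ := real_inner_le_norm _ _
      _ ≤ L * ‖t • v‖ * ‖v‖ := by
          gcongr
          simpa using hlip (a + t • v) a
      _ = L * t * ‖v‖ ^ 2 := by rw [norm_smul, Real.norm_of_nonneg ht.1.le]; ring
  have h01 :=
    hanti (Set.left_mem_Icc.2 zero_le_one) (Set.right_mem_Icc.2 zero_le_one) zero_le_one
  simp only [ψ, v, one_smul, zero_smul, add_zero, add_sub_cancel, zero_mul, one_mul, sub_zero,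
    one_pow, mul_one, ne_eq, OfNat.ofNat_ne_zero, not_false_eq_true, zero_pow] at h01
  linarith

lemma sq_norm_gradient_le {g : F → F} {L : ℝ} (hL : 0 < L) (hg : ∀ y, HasGradientAt f (g y) y)
    (hlip : ∀ y y', ‖g y - g y'‖ ≤ L * ‖y - y'‖) {m : ℝ} (hm : ∀ y, m ≤ f y) (a : F) :
    ‖g a‖ ^ 2 ≤ 2 * L * (f a - m) := by
  have h := le_add_inner_gradient_add_sq hg hlip a (a - L⁻¹ • g a)
  rw [sub_sub_cancel_left, inner_neg_right, real_inner_smul_right, real_inner_self_eq_norm_sq,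
    norm_neg, norm_smul, Real.norm_of_nonneg (inv_nonneg.2 hL.le)] at h
  have hsq : L / 2 * (L⁻¹ * ‖g a‖) ^ 2 = L⁻¹ * ‖g a‖ ^ 2 / 2 := by field_simp
  have hdecr : L⁻¹ * ‖g a‖ ^ 2 / 2 ≤ f a - m := by linarith [hm (a - L⁻¹ • g a)]
  calc ‖g a‖ ^ 2 = 2 * L * (L⁻¹ * ‖g a‖ ^ 2 / 2) := by field_simp
    _ ≤ 2 * L * (f a - m) := by gcongr

end Gradient

section Entropy

open InformationTheory

variable {n : ℕ} {x x' z g : Fin n → ℝ}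

lemma l1_nonneg (z : Fin n → ℝ) : 0 ≤ l1 z := sum_nonneg fun i _ => abs_nonneg (z i)

lemma Dh_eq_sum_mul_klFun (hx : ∀ i, 0 < x i) : Dh z x = ∑ i, x i * klFun (z i / x i) := by
  refine sum_congr rfl fun i _ => ?_
  have := (hx i).ne'
  rw [klFun_apply]
  field_simp
  ring

lemma Dh_nonneg_s13 (hz : ∀ i, 0 ≤ z i) (hx : ∀ i, 0 < x i) : 0 ≤ Dh z x := by
  rw [Dh_eq_sum_mul_klFun hx]
  exact sum_nonneg fun i _ => mul_nonneg (hx i).le (klFun_nonneg (div_nonneg (hz i) (hx i).le))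

lemma five_eighths_mul_sum_le_Dh_add_l1 (hz : ∀ i, 0 ≤ z i) (hx : ∀ i, 0 < x i) :
    5 / 8 * ∑ i, x i ≤ Dh z x + l1 z := by
  rw [Dh_eq_sum_mul_klFun hx, l1, mul_sum, ← sum_add_distrib]
  refine sum_le_sum fun i _ => ?_
  have ht := neg_three_eighths_le_mul_log (div_nonneg (hz i) (hx i).le)
  have hxz : x i * (z i / x i) = z i := mul_div_cancel₀ _ (hx i).ne'
  rw [klFun_apply, abs_of_nonneg (hz i)]
  nlinarith [hx i]

lemma Dh_sub_Dh_eq {α : ℝ} (hx : ∀ i, 0 < x i) (hx' : ∀ i, x' i = x i * exp (-α * g i)) :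
    Dh z x - Dh z x' = ∑ i, x i * (1 - exp (-α * g i)) - α * ∑ i, z i * g i := by
  rw [Dh, Dh, ← sum_sub_distrib, mul_sum, ← sum_sub_distrib]
  refine sum_congr rfl fun i _ => ?_
  rcases eq_or_ne (z i) 0 with hzi | hzi
  · simp only [hzi, zero_div, log_zero, mul_zero, sub_self, zero_add, hx' i, zero_mul,
      sub_zero]
    ring
  · have hlog : log (z i / (x i * exp (-α * g i))) = log (z i / x i) + α * g i := by
      rw [← div_div, log_div (div_ne_zero hzi (hx i).ne') (exp_pos _).ne', log_exp]
      ring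
    rw [hx' i, hlog]
    ring

lemma sub_le_Dh_sub_Dh {α : ℝ} (hx : ∀ i, 0 < x i) (hα : ∀ i, -α * g i ≤ 1.79)
    (hx' : ∀ i, x' i = x i * exp (-α * g i)) :
    α * ∑ i, g i * (x i - z i) - α ^ 2 * ∑ i, x i * g i ^ 2 ≤ Dh z x - Dh z x' := by
  rw [Dh_sub_Dh_eq hx hx']
  have hterm (i : Fin n) : x i * (α * g i - (α * g i) ^ 2) ≤ x i * (1 - exp (-α * g i)) := by
    have := exp_le_one_add_add_sq (hα i)
    exact mul_le_mul_of_nonneg_left (by nlinarith) (hx i).le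
  calc α * ∑ i, g i * (x i - z i) - α ^ 2 * ∑ i, x i * g i ^ 2
      = ∑ i, x i * (α * g i - (α * g i) ^ 2) - α * ∑ i, z i * g i := by
        simp only [mul_sum, ← sum_sub_distrib]
        exact sum_congr rfl fun i _ => by ring
    _ ≤ ∑ i, x i * (1 - exp (-α * g i)) - α * ∑ i, z i * g i :=
        sub_le_sub_right (sum_le_sum fun i _ => hterm i) _

end Entropy

lemma sq_sup'_abs_le_sum_sq {ι : Type*} [Fintype ι] [Nonempty ι] (g : ι → ℝ) :
    (univ.sup' univ_nonempty fun j => |g j|) ^ 2 ≤ ∑ j, g j ^ 2 := by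
  obtain ⟨j, -, hj⟩ := exists_mem_eq_sup' univ_nonempty fun j => |g j|
  rw [hj, sq_abs]
  exact single_le_sum (fun j _ => sq_nonneg (g j)) (mem_univ j)

lemma sum_mul_sq_le_sum_mul_sum_sq {ι : Type*} [Fintype ι] {x : ι → ℝ} (hx : ∀ i, 0 ≤ x i)
    (g : ι → ℝ) : ∑ j, x j * g j ^ 2 ≤ (∑ j, x j) * ∑ j, g j ^ 2 := by
  rw [sum_mul]
  exact sum_le_sum fun j _ => mul_le_mul_of_nonneg_left
    (single_le_sum (fun j _ => sq_nonneg (g j)) (mem_univ j)) (hx j)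

section StepSize

variable {n : ℕ} [NeZero n] {x x' z g : Fin n → ℝ} {δ : ℝ}

-- `δ` stands for the optimality gap `f x - f*`.
noncomputable def stepSize (x g : Fin n → ℝ) (δ : ℝ) : ℝ :=
  min (δ / (2 * ∑ j, x j * g j ^ 2)) (1.79 / univ.sup' univ_nonempty fun j => |g j|)

lemma stepSize_nonneg (hx : ∀ i, 0 ≤ x i) (hδ : 0 ≤ δ) : 0 ≤ stepSize x g δ := by
  have hS : 0 ≤ ∑ j, x j * g j ^ 2 := sum_nonneg fun j _ => mul_nonneg (hx j) (sq_nonneg _)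
  have hG : 0 ≤ univ.sup' univ_nonempty fun j => |g j| :=
    (abs_nonneg _).trans (le_sup' (fun j => |g j|) (mem_univ 0))
  exact le_min (by positivity) (by positivity)

lemma stepSize_mul_le (hx : ∀ i, 0 ≤ x i) (hδ : 0 ≤ δ) :
    stepSize x g δ * (2 * ∑ j, x j * g j ^ 2) ≤ δ := by
  have hS : 0 ≤ ∑ j, x j * g j ^ 2 := sum_nonneg fun j _ => mul_nonneg (hx j) (sq_nonneg _)
  exact mul_le_of_le_div₀ hδ (by positivity) (min_le_left _ _)

lemma neg_stepSize_mul_le (hx : ∀ i, 0 ≤ x i) (hδ : 0 ≤ δ) (i : Fin n) :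
    -stepSize x g δ * g i ≤ 1.79 := by
  set G := univ.sup' univ_nonempty fun j => |g j|
  have hgi : |g i| ≤ G := le_sup' (fun j => |g j|) (mem_univ i)
  have hα := stepSize_nonneg (g := g) hx hδ
  calc -stepSize x g δ * g i ≤ stepSize x g δ * |g i| := by
        rw [neg_mul, ← mul_neg]; gcongr; exact neg_le_abs _
    _ ≤ 1.79 / G * |g i| := by gcongr; exact min_le_right _ _
    _ ≤ 1.79 := by
        rcases ((abs_nonneg _).trans hgi).eq_or_lt with hG | hG
        · norm_num [← hG]
        · rw [div_mul_eq_mul_div, div_le_iff₀ hG]; gcongr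

-- `S = ∑ xᵢ gᵢ²`, `G = ‖g‖_∞`, `X = ∑ xᵢ`, and `d` is the decrease of `D_h(z, ·)` in one step.
lemma le_mul_or_le_mul_sq_of_min_mul_le {δ S G X L d : ℝ} (hL : 0 < L) (hS : 0 < S)
    (hG : 0 < G) (hSX : S ≤ X * (2 * L * δ)) (hGδ : G ^ 2 ≤ 2 * L * δ)
    (hd : min (δ / (2 * S)) (1.79 / G) * δ / 2 ≤ d) :
    δ ≤ 8 * L * X * d ∨ δ ≤ 3 * L * d ^ 2 := by
  have hδ : 0 < δ := by nlinarith [pow_pos hG 2]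
  rcases min_cases (δ / (2 * S)) (1.79 / G) with ⟨hmin, -⟩ | ⟨hmin, -⟩ <;> rw [hmin] at hd
  · left
    have hd' : δ ^ 2 ≤ 4 * S * d := by
      rw [div_mul_eq_mul_div, div_div, div_le_iff₀ (by positivity)] at hd; nlinarith
    have : δ * δ ≤ δ * (8 * L * X * d) := by nlinarith
    exact le_of_mul_le_mul_left this hδ
  · right
    have hd' : 1.79 * δ ≤ 2 * G * d := by
      rw [div_mul_eq_mul_div, div_div, div_le_iff₀ (by positivity)] at hd; linarith
    have : 1.79 ^ 2 * δ ^ 2 ≤ 4 * G ^ 2 * d ^ 2 := by nlinarith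
    have : δ * δ ≤ δ * (3 * L * d ^ 2) := by nlinarith
    exact le_of_mul_le_mul_left this hδ

lemma nonneg_and_le_mul_Dh_sub_Dh_stepSize {L : ℝ} (hL : 0 < L) (hz : ∀ i, 0 ≤ z i)
    (hx : ∀ i, 0 < x i) (hg : g ≠ 0)
    (hconv : δ ≤ ∑ i, g i * (x i - z i)) (hsmooth : ∑ i, g i ^ 2 ≤ 2 * L * δ)
    (hx' : ∀ i, x' i = x i * exp (-stepSize x g δ * g i)) :
    0 ≤ Dh z x - Dh z x' ∧ δ ≤ 16 * L * (Dh z x + l1 z) * (Dh z x - Dh z x') := by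
  set α := stepSize x g δ
  set S := ∑ i, x i * g i ^ 2
  set d := Dh z x - Dh z x'
  have hδ : 0 ≤ δ := nonneg_of_mul_nonneg_right
    ((sum_nonneg fun i _ => sq_nonneg (g i)).trans hsmooth) (by positivity)
  have hα : 0 ≤ α := stepSize_nonneg (fun i => (hx i).le) hδ
  have hd : α * δ / 2 ≤ d := calc
    α * δ / 2 ≤ α * δ - α ^ 2 * S := by
      nlinarith [stepSize_mul_le (g := g) (fun i => (hx i).le) hδ]
    _ ≤ α * ∑ i, g i * (x i - z i) - α ^ 2 * S := by gcongr
    _ ≤ d := sub_le_Dh_sub_Dh hx (neg_stepSize_mul_le (fun i => (hx i).le) hδ) hx'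
  have hd0 : 0 ≤ d := le_trans (by positivity) hd
  refine ⟨hd0, ?_⟩
  obtain ⟨j, hj⟩ := Function.ne_iff.1 hg
  have hS : 0 < S := sum_pos' (fun i _ => mul_nonneg (hx i).le (sq_nonneg _))
    ⟨j, mem_univ j, mul_pos (hx j) (pow_pos (abs_pos.2 hj) 2 |>.trans_eq (sq_abs _))⟩
  have hG : 0 < univ.sup' univ_nonempty fun j => |g j| :=
    (abs_pos.2 hj).trans_le (le_sup' (fun j => |g j|) (mem_univ j))
  have hx'pos (i : Fin n) : 0 < x' i := hx' i ▸ mul_pos (hx i) (exp_pos _)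
  have hdD : d ≤ Dh z x := sub_le_self _ (Dh_nonneg_s13 hz hx'pos)
  have hX := five_eighths_mul_sum_le_Dh_add_l1 hz hx
  have hLd : 0 ≤ L * d := mul_nonneg hL.le hd0
  have hD : 0 ≤ Dh z x := Dh_nonneg_s13 hz hx
  have hl1 := l1_nonneg z
  have hSX : S ≤ (∑ i, x i) * (2 * L * δ) :=
    (sum_mul_sq_le_sum_mul_sum_sq (fun i => (hx i).le) g).trans
      (mul_le_mul_of_nonneg_left hsmooth (sum_nonneg fun i _ => (hx i).le))
  rcases le_mul_or_le_mul_sq_of_min_mul_le hL hS hG hSX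
    ((sq_sup'_abs_le_sum_sq g).trans hsmooth) hd with h | h
  · nlinarith [mul_le_mul_of_nonneg_left hX hLd, mul_nonneg hLd (add_nonneg hD hl1)]
  · nlinarith [mul_le_mul_of_nonneg_left hdD hLd, mul_nonneg hLd hD, mul_nonneg hLd hl1]

end StepSize

lemma succ_mul_le_mul_of_le_mul_sub {D : ℕ → ℝ} {ε C : ℝ} {k : ℕ} (hC : 0 ≤ C)
    (hD : 0 ≤ D (k + 1)) (h : ∀ i ∈ range (k + 1), ε ≤ C * (D i - D (i + 1))) :
    (k + 1) * ε ≤ C * D 0 :=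
  calc (k + 1) * ε = ∑ i ∈ range (k + 1), ε := by simp
    _ ≤ ∑ i ∈ range (k + 1), C * (D i - D (i + 1)) := sum_le_sum h
    _ = C * (D 0 - D (k + 1)) := by rw [← mul_sum, sum_range_sub']
    _ ≤ C * D 0 := by gcongr; linarith

/-- Entropic mirror descent for convex `L`-smooth functions: if `f` is convex
and differentiable with `L`-Lipschitz gradient, `z ∈ ℝⁿ₊` is a global
minimizer of `f` with `f* = f(z)`, `x₀ ∈ ℝⁿ₊₊`, and
`x_{k+1} = x_k ∘ exp(-α_k ∇f(x_k))` with
`α_k = min { (f(x_k) - f*)/(2 ‖∇f(x_k)‖²_{x_k}) , 1.79/‖∇f(x_k)‖_∞ }`, then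
`min_{0 ≤ i ≤ k} f(x_i) - f* ≤ 16 L D_h(z,x₀)(D_h(z,x₀) + ‖z‖₁)/(k+1)`. -/
theorem mirror_descent_convex_smooth {n : ℕ} [NeZero n]
    (f : EuclideanSpace ℝ (Fin n) → ℝ)
    (g : EuclideanSpace ℝ (Fin n) → EuclideanSpace ℝ (Fin n))
    (L : ℝ) (hL : 0 < L)
    (hconv : ConvexOn ℝ Set.univ f)
    (hgrad : ∀ y, HasGradientAt f (g y) y)
    (hlip : ∀ y y', ‖g y - g y'‖ ≤ L * ‖y - y'‖)
    (z : EuclideanSpace ℝ (Fin n)) (hz : ∀ i, 0 ≤ z i)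
    (hmin : ∀ y, f z ≤ f y)
    (x : ℕ → EuclideanSpace ℝ (Fin n)) (hx0 : ∀ i, 0 < x 0 i)
    (hgne : ∀ k, g (x k) ≠ 0)
    (hrec : ∀ k i, x (k + 1) i =
      x k i * Real.exp (-(min ((f (x k) - f z) / (2 * ∑ j, x k j * (g (x k) j) ^ 2))
        (1.79 / Finset.univ.sup' Finset.univ_nonempty fun j => |g (x k) j|))
        * g (x k) i)) :
    ∀ k : ℕ, (Finset.range (k + 1)).inf' (Finset.nonempty_range_iff.mpr (Nat.add_one_ne_zero k))
        (fun i => f (x i)) - f z ≤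
      16 * L * Dh z (x 0) * (Dh z (x 0) + l1 z) / (k + 1) := by
  have hpos (k : ℕ) : ∀ i, 0 < x k i := by
    induction k with
    | zero => exact hx0
    | succ k ih => exact fun i => hrec k i ▸ mul_pos (ih i) (exp_pos _)
  have hdecr (k : ℕ) : 0 ≤ Dh z (x k) - Dh z (x (k + 1)) ∧
      f (x k) - f z ≤ 16 * L * (Dh z (x k) + l1 z) * (Dh z (x k) - Dh z (x (k + 1))) := by
    refine nonneg_and_le_mul_Dh_sub_Dh_stepSize hL hz (hpos k) ?_ ?_ ?_ (hrec k)
    · simpa using hgne k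
    · simpa [PiLp.inner_apply, mul_comm] using hconv.sub_le_inner_gradient (hgrad (x k)) z
    · simpa [EuclideanSpace.norm_sq_eq] using sq_norm_gradient_le hL hgrad hlip hmin (x k)
  have hanti : Antitone fun k => Dh z (x k) :=
    antitone_nat_of_succ_le fun k => sub_nonneg.1 (hdecr k).1
  have hC : 0 ≤ 16 * L * (Dh z (x 0) + l1 z) :=
    mul_nonneg (by positivity) (add_nonneg (Dh_nonneg_s13 hz (hpos 0)) (l1_nonneg z))
  intro k
  rw [le_div_iff₀ (by positivity), mul_comm, mul_right_comm]
  refine succ_mul_le_mul_of_le_mul_sub (D := fun k => Dh z (x k)) hC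
    (Dh_nonneg_s13 hz (hpos (k + 1))) fun i hi => ?_
  calc _ ≤ f (x i) - f z := sub_le_sub_right (inf'_le _ hi) _
    _ ≤ 16 * L * (Dh z (x i) + l1 z) * (Dh z (x i) - Dh z (x (i + 1))) := (hdecr i).2
    _ ≤ 16 * L * (Dh z (x 0) + l1 z) * (Dh z (x i) - Dh z (x (i + 1))) := by
        gcongr
        · exact (hdecr i).1
        · exact hanti (Nat.zero_le i)
end
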